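/- arXiv:2203.00992 — 4 statements merged into one kernel-verified Lean document; each statement's English description precedes it below -/
import Mathlib

section
/- Let γ ∈ S_n, let I_0, I_1 ⊆ [n] be disjoint with X_γ ∩ F(I_0, I_1) nonempty, where X_γ = { x ∈ {0,1}^n : x ⪰ γ(x) }, and suppose the fixings are complete for γ (for every i ∉ I_0 ∪ I_1 and each b ∈ {0,1}, there exists x ∈ X_γ ∩ F(I_0, I_1) with x_i = b). Let k ∈ [n] and suppose for every i < k either both i and γ⁻¹(i) lie in I_0, or both lie in I_1. Then: (a) if k ∈ I_0 then γ⁻¹(k) ∈ I_0; and (b) if γ⁻¹(k) ∈ I_1 then k ∈ I_1. -/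
/-- Strict lexicographic order on binary vectors: at the first differing index, `x` has 1. -/
def lexGt {n : ℕ} (x y : Fin n → Bool) : Prop :=
  ∃ j : Fin n, (∀ i : Fin n, i < j → x i = y i) ∧ y j < x j

/-- Non-strict lexicographic order `x ⪰ y`. -/
def lexGe {n : ℕ} (x y : Fin n → Bool) : Prop :=
  x = y ∨ lexGt x y

/-- Coordinate-permuting action: `(γ • x) i = x (γ⁻¹ i)`. -/
def permAct {n : ℕ} (γ : Equiv.Perm (Fin n)) (x : Fin n → Bool) : Fin n → Bool :=
  fun i => x (γ⁻¹ i)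

/-- `FF I0 I1` is the set of binary vectors fixed to 0 on `I0` and to 1 on `I1`. -/
def FF {n : ℕ} (I0 I1 : Finset (Fin n)) : Set (Fin n → Bool) :=
  {x | (∀ i ∈ I0, x i = false) ∧ ∀ i ∈ I1, x i = true}

theorem completeness_implication (n : ℕ) (γ : Equiv.Perm (Fin n))
    (I0 I1 : Finset (Fin n)) (hdis : Disjoint I0 I1)
    (hne : ∃ x ∈ FF I0 I1, lexGe x (permAct γ x))
    (hcomp : ∀ i : Fin n, i ∉ I0 ∪ I1 → ∀ b : Bool,
      ∃ x ∈ FF I0 I1, lexGe x (permAct γ x) ∧ x i = b)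
    (k : Fin n)
    (hk : ∀ i : Fin n, i < k →
      (i ∈ I0 ∧ γ⁻¹ i ∈ I0) ∨ (i ∈ I1 ∧ γ⁻¹ i ∈ I1)) :
    (k ∈ I0 → γ⁻¹ k ∈ I0) ∧ (γ⁻¹ k ∈ I1 → k ∈ I1) := by
  have key : ∀ x ∈ FF I0 I1, lexGe x (permAct γ x) → x k = false →
      x (γ⁻¹ k) = true → False := by
    intro x hx hle hxk hxk'
    have hag : ∀ i : Fin n, i < k → permAct γ x i = x i := by
      intro i hi
      rcases hk i hi with ⟨h1, h2⟩ | ⟨h1, h2⟩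
      · exact (hx.1 _ h2).trans (hx.1 _ h1).symm
      · exact (hx.2 _ h2).trans (hx.2 _ h1).symm
    have hgk : permAct γ x k = true := hxk'
    rcases hle with heq | ⟨j, hpre, hj⟩
    · rw [heq] at hxk; rw [hxk] at hgk; simp at hgk
    · rcases lt_trichotomy j k with h | h | h
      · rw [hag j h] at hj; exact lt_irrefl _ hj
      · rw [h] at hj; rw [hxk, hgk] at hj; exact absurd hj (by decide)
      · have := hpre k h
        rw [hxk, hgk] at this; simp at this
  constructor
  · intro hkI0
    by_contra hnot
    by_cases h1 : γ⁻¹ k ∈ I1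
    · obtain ⟨x, hx, hle⟩ := hne
      exact key x hx hle (hx.1 _ hkI0) (hx.2 _ h1)
    · have hni : γ⁻¹ k ∉ I0 ∪ I1 := by rw [Finset.mem_union]; exact fun h => h.elim hnot h1
      obtain ⟨x, hx, hle, hxb⟩ := hcomp _ hni true
      exact key x hx hle (hx.1 _ hkI0) hxb
  · intro h1
    by_contra hnot
    by_cases h0 : k ∈ I0
    · obtain ⟨x, hx, hle⟩ := hne
      exact key x hx hle (hx.1 _ h0) (hx.2 _ h1)
    · have hni : k ∉ I0 ∪ I1 := by simp [h0, hnot]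
      obtain ⟨x, hx, hle, hxb⟩ := hcomp _ hni false
      exact key x hx hle hxb (hx.2 _ h1)
end

section
/- Let Γ be a subgroup of the cyclic group generated by the cyclic shift (1,…,n) on [n], and let I_0, I_1 ⊆ [n] be disjoint index sets that are complete for each individual constraint x ⪰ γ(x), γ ∈ Γ (i.e., for every γ ∈ Γ, every i ∉ I_0 ∪ I_1, and each b ∈ {0,1}, if X_γ ∩ F(I_0, I_1) ≠ ∅ then there exists x ∈ X_γ ∩ F(I_0, I_1) with x_i = b, where X_γ = {x ∈ {0,1}^n : x ⪰ γ(x)}). Then ⋂_{γ∈Γ} X_γ ∩ F(I_0, I_1) is nonempty if and only if X_γ ∩ F(I_0, I_1) is nonempty for every γ ∈ Γ. -/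
/-- If `x` ties with `y` before `j` and strictly loses at `j`, then `¬ x ⪰ y`. -/
lemma lexGe_loss {n : ℕ} (x y : Fin n → Bool) (j : Fin n)
    (hties : ∀ i, i < j → x i = y i) (hxj : x j = false) (hyj : y j = true) :
    ¬ lexGe x y := by
  rintro (rfl | ⟨t, ht, hs⟩)
  · rw [hxj] at hyj; cases hyj
  · rcases lt_trichotomy t j with h | h | h
    · rw [hties t h] at hs; exact lt_irrefl _ hs
    · subst h; rw [hxj, hyj] at hs; exact absurd hs (by decide)
    · have := ht j h; rw [hxj, hyj] at this; cases this

/-- Turning off a `1` of `x` at a position `d` with `n - c ≤ d` preserves `x ⪰ (shift by c) x`. -/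
lemma lexGe_update {n : ℕ} [NeZero n] (c : Fin n) (hc : c ≠ 0) (x : Fin n → Bool)
    (hx : lexGe x (fun i => x (i - c))) (d : Fin n) (hd : n - (c : ℕ) ≤ (d : ℕ))
    (hxd : x d = true) :
    lexGe (Function.update x d false) (fun i => Function.update x d false (i - c)) := by
  have hcpos : 0 < (c : ℕ) := by
    rcases Nat.eq_zero_or_pos (c : ℕ) with h | h
    · exact absurd (Fin.ext (by simpa using h)) hc
    · exact h
  have hcn : (c : ℕ) < n := c.isLt
  have hdn : (d : ℕ) < n := d.isLt
  set w : Fin n := d + c with hw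
  have hwval : (w : ℕ) = (d : ℕ) - (n - (c : ℕ)) := by
    have h1 : (w : ℕ) = ((d : ℕ) + (c : ℕ)) % n := Fin.val_add d c
    have h2 : (d : ℕ) + (c : ℕ) = ((d : ℕ) - (n - (c : ℕ))) + n := by omega
    rw [h1, h2, Nat.add_mod_right, Nat.mod_eq_of_lt (by omega)]
  have hwd : w < d := by rw [Fin.lt_def, hwval]; omega
  have hsub : ∀ i : Fin n, i - c = d ↔ i = w := by
    intro i; rw [hw]; exact sub_eq_iff_eq_add
  have hwc : w - c = d := by rw [hw]; exact add_sub_cancel_right d c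
  have hne : ∀ i : Fin n, i ≠ d → Function.update x d false i = x i :=
    fun i h => Function.update_of_ne h _ _
  have hupd : Function.update x d false d = false := Function.update_self _ _ _
  rcases hx with hx | ⟨t, htie, hst⟩
  · -- x is periodic
    have hper : ∀ i, x i = x (i - c) := fun i => congrFun hx i
    refine Or.inr ⟨w, ?_, ?_⟩
    · intro i hi
      show Function.update x d false i = Function.update x d false (i - c)
      have hid : i ≠ d := ne_of_lt (lt_trans hi hwd)
      have hicd : i - c ≠ d := by
        intro h; rw [(hsub i).mp h] at hi; exact lt_irrefl _ hi
      rw [hne i hid, hne _ hicd]; exact hper i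
    · show Function.update x d false (w - c) < Function.update x d false w
      have hxw : x w = true := by rw [hper w, hwc, hxd]
      rw [hwc, hupd, hne w (ne_of_lt hwd), hxw]
      decide
  · have hb := Bool.lt_iff.mp hst
    have hxtc : x (t - c) = false := hb.1
    have hxt : x t = true := hb.2
    have htw : t ≠ w := by
      intro h; rw [h, hwc, hxd] at hxtc; cases hxtc
    by_cases hdt : d = t
    · -- remove the winning position itself; win one step earlier
      subst hdt
      refine Or.inr ⟨w, ?_, ?_⟩
      · intro i hi
        show Function.update x d false i = Function.update x d false (i - c)
        have hid : i ≠ d := ne_of_lt (lt_trans hi hwd)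
        have hicd : i - c ≠ d := by
          intro h; rw [(hsub i).mp h] at hi; exact lt_irrefl _ hi
        rw [hne i hid, hne _ hicd]; exact htie i (lt_trans hi hwd)
      · show Function.update x d false (w - c) < Function.update x d false w
        have hxw' : x w = true := by rw [htie w hwd]; show x (w - c) = true; rw [hwc, hxd]
        rw [hwc, hupd, hne w (ne_of_lt hwd), hxw']
        decide
    · rcases lt_or_gt_of_ne htw with h | h
      · -- t < w : keep the same witness
        refine Or.inr ⟨t, ?_, ?_⟩
        · intro i hi
          show Function.update x d false i = Function.update x d false (i - c)
          have hid : i ≠ d := ne_of_lt (lt_trans hi (lt_trans h hwd))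
          have hicd : i - c ≠ d := by
            intro hh
            rw [(hsub i).mp hh] at hi
            exact absurd (lt_trans hi h) (lt_irrefl _)
          rw [hne i hid, hne _ hicd]; exact htie i hi
        · show Function.update x d false (t - c) < Function.update x d false t
          have htd : t ≠ d := fun hh => hdt hh.symm
          have htcd : t - c ≠ d := by
            intro hh; exact htw ((hsub t).mp hh)
          rw [hne _ htcd, hne t htd, hxtc, hxt]
          decide
      · -- w < t : win at w
        refine Or.inr ⟨w, ?_, ?_⟩
        · intro i hi
          show Function.update x d false i = Function.update x d false (i - c)
          have hid : i ≠ d := ne_of_lt (lt_trans hi hwd)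
          have hicd : i - c ≠ d := by
            intro hh; rw [(hsub i).mp hh] at hi; exact lt_irrefl _ hi
          rw [hne i hid, hne _ hicd]; exact htie i (lt_trans hi h)
        · show Function.update x d false (w - c) < Function.update x d false w
          have hxw : x w = true := by
            rw [htie w h]; show x (w - c) = true; rw [hwc, hxd]
          rw [hwc, hupd, hne w (ne_of_lt hwd), hxw]
          decide

open Fin.CommRing in
/-- Every element of the subgroup generated by the rotation acts as `i ↦ i + c`. -/
lemma rot_shift {m : ℕ} (γ : Equiv.Perm (Fin (m + 1)))
    (h : γ ∈ Subgroup.zpowers (finRotate (m + 1))) :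
    ∃ c : Fin (m + 1), ∀ i, γ i = i + c := by
  obtain ⟨z, hz⟩ := Subgroup.mem_zpowers_iff.mp h
  have key : ∀ (t : ℤ) (i : Fin (m + 1)),
      ((finRotate (m + 1)) ^ t) i = i + (t : Fin (m + 1)) := by
    intro t
    induction t using Int.induction_on with
    | zero => intro i; simp
    | succ k ih =>
        intro i
        rw [zpow_add_one, Equiv.Perm.mul_apply, ih, finRotate_succ_apply]
        push_cast
        ring
    | pred k ih =>
        intro i
        have hinv : (finRotate (m + 1))⁻¹ i = i - 1 := by
          have hg : finRotate (m + 1) (i - 1) = i := by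
            rw [finRotate_succ_apply]; ring
          conv_lhs => rw [← hg]
          exact Equiv.symm_apply_apply _ _
        rw [zpow_sub_one, Equiv.Perm.mul_apply, hinv, ih]
        push_cast
        ring
  exact ⟨((z : ℤ) : Fin (m + 1)), fun i => by rw [← hz, key]⟩

theorem monotone_cyclic_group_feasibility (n : ℕ)
    (Γ : Subgroup (Equiv.Perm (Fin n)))
    (hΓ : Γ ≤ Subgroup.zpowers (finRotate n))
    (I0 I1 : Finset (Fin n)) (hdis : Disjoint I0 I1)
    (hcomp : ∀ γ ∈ Γ, ∀ i : Fin n, i ∉ I0 ∪ I1 → ∀ b : Bool,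
      (∃ x ∈ FF I0 I1, lexGe x (permAct γ x)) →
      ∃ x ∈ FF I0 I1, lexGe x (permAct γ x) ∧ x i = b) :
    (∃ x ∈ FF I0 I1, ∀ γ ∈ Γ, lexGe x (permAct γ x)) ↔
      ∀ γ ∈ Γ, ∃ x ∈ FF I0 I1, lexGe x (permAct γ x) := by
  constructor
  · rintro ⟨x, hxFF, hall⟩ γ hγ
    exact ⟨x, hxFF, hall γ hγ⟩
  intro hne
  by_cases hfree : ∃ i : Fin n, i ∉ I0 ∪ I1
  case neg =>
    -- all coordinates are fixed
    push_neg at hfree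
    refine ⟨fun i => decide (i ∈ I1), ⟨?_, ?_⟩, ?_⟩
    · intro i hi
      have : i ∉ I1 := Finset.disjoint_left.mp hdis hi
      simp [this]
    · intro i hi; simp [hi]
    · intro γ hγ
      obtain ⟨x, hxFF, hxge⟩ := hne γ hγ
      have hx : x = fun i => decide (i ∈ I1) := by
        funext i
        rcases Finset.mem_union.mp (hfree i) with h | h
        · rw [hxFF.1 i h]; simp [Finset.disjoint_left.mp hdis h]
        · rw [hxFF.2 i h]; simp [h]
      rw [← hx]
      exact hxge
  case pos =>
    obtain ⟨i0, hi0⟩ := hfree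
    haveI : NeZero n := ⟨(Fin.pos i0).ne'⟩
    obtain ⟨m, rfl⟩ : ∃ m, n = m + 1 := ⟨n - 1, by have := Fin.pos i0; omega⟩
    set Fr : Finset (Fin (m + 1)) := Finset.univ.filter (fun i => i ∉ I0 ∪ I1) with hFr
    have hFrne : Fr.Nonempty := ⟨i0, Finset.mem_filter.mpr ⟨Finset.mem_univ _, hi0⟩⟩
    set f := Fr.min' hFrne with hf
    have hfmem : f ∈ Fr := Fr.min'_mem hFrne
    have hfI01 : f ∉ I0 ∪ I1 := by simpa [hFr] using hfmem
    have hfI0 : f ∉ I0 := fun h => hfI01 (Finset.mem_union_left _ h)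
    have hfI1 : f ∉ I1 := fun h => hfI01 (Finset.mem_union_right _ h)
    have hfle : ∀ i, i ∉ I0 ∪ I1 → f ≤ i := by
      intro i hi
      exact Fr.min'_le i (Finset.mem_filter.mpr ⟨Finset.mem_univ _, hi⟩)
    set z : Fin (m + 1) → Bool := fun i => decide (i ∈ I1 ∨ i = f) with hz
    have hzFF : z ∈ FF I0 I1 := by
      constructor
      · intro i hi
        have h1 : i ∉ I1 := Finset.disjoint_left.mp hdis hi
        have h2 : i ≠ f := fun h => hfI0 (h ▸ hi)
        show decide (i ∈ I1 ∨ i = f) = false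
        simp [h1, h2]
      · intro i hi
        show decide (i ∈ I1 ∨ i = f) = true
        simp [hi]
    refine ⟨z, hzFF, ?_⟩
    intro γ hγ
    obtain ⟨c, hγc⟩ := rot_shift γ (hΓ hγ)
    have hγinv : ∀ i, γ⁻¹ i = i - c := by
      intro i
      have h1 : γ (i - c) = i := by rw [hγc]; exact sub_add_cancel i c
      conv_lhs => rw [← h1]
      exact Equiv.symm_apply_apply _ _
    have hperm : ∀ y : Fin (m + 1) → Bool, permAct γ y = fun i => y (i - c) := by
      intro y; funext i; rw [permAct, hγinv]
    rw [hperm]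
    by_cases hc0 : c = 0
    · left; funext i; rw [hc0, sub_zero]
    -- main case
    set S : Finset (Fin (m + 1)) :=
      Finset.univ.filter (fun i => ¬((i ∈ I0 ∧ i - c ∈ I0) ∨ (i ∈ I1 ∧ i - c ∈ I1))) with hS
    have hfS : f ∈ S := by
      refine Finset.mem_filter.mpr ⟨Finset.mem_univ _, ?_⟩
      rintro (⟨h, -⟩ | ⟨h, -⟩)
      · exact hfI0 h
      · exact hfI1 h
    have hSne : S.Nonempty := ⟨f, hfS⟩
    set j := S.min' hSne with hj
    have hjmem : ¬((j ∈ I0 ∧ j - c ∈ I0) ∨ (j ∈ I1 ∧ j - c ∈ I1)) :=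
      (Finset.mem_filter.mp (S.min'_mem hSne)).2
    have hjle : j ≤ f := S.min'_le f hfS
    have hties : ∀ (x : Fin (m + 1) → Bool), x ∈ FF I0 I1 →
        ∀ i, i < j → x i = x (i - c) := by
      intro x hx i hi
      have hiS : i ∉ S := by
        intro h
        exact absurd (S.min'_le i h) (not_le.mpr hi)
      have hiS2 : (i ∈ I0 ∧ i - c ∈ I0) ∨ (i ∈ I1 ∧ i - c ∈ I1) :=
        not_not.mp (fun hp => hiS (Finset.mem_filter.mpr ⟨Finset.mem_univ _, hp⟩))
      rcases hiS2 with ⟨h1, h2⟩ | ⟨h1, h2⟩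
      · rw [hx.1 _ h1, hx.1 _ h2]
      · rw [hx.2 _ h1, hx.2 _ h2]
    have hXloss : ∀ x ∈ FF I0 I1, lexGe x (permAct γ x) → x j = false →
        x (j - c) = true → False := by
      intro x hxFF hxge h1 h2
      rw [hperm x] at hxge
      exact lexGe_loss x _ j (fun i hi => hties x hxFF i hi) h1 h2 hxge
    have hjI0 : j ∉ I0 := by
      intro hj0
      have hjc0 : j - c ∉ I0 := fun h => hjmem (Or.inl ⟨hj0, h⟩)
      obtain ⟨x, hxFF, hxge, hxval⟩ :
          ∃ x, x ∈ FF I0 I1 ∧ lexGe x (permAct γ x) ∧ x (j - c) = true := by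
        by_cases h1 : j - c ∈ I1
        · obtain ⟨x, hxFF, hxge⟩ := hne γ hγ
          exact ⟨x, hxFF, hxge, hxFF.2 _ h1⟩
        · obtain ⟨x, hxFF, hxge, hv⟩ :=
            hcomp γ hγ (j - c) (by simp [hjc0, h1]) true (hne γ hγ)
          exact ⟨x, hxFF, hxge, hv⟩
      exact hXloss x hxFF hxge (hxFF.1 j hj0) hxval
    have hjcI1 : j - c ∉ I1 := by
      intro hj1
      have hjI1 : j ∉ I1 := fun h => hjmem (Or.inr ⟨h, hj1⟩)
      obtain ⟨x, hxFF, hxge, hv⟩ :=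
        hcomp γ hγ j (by simp [hjI0, hjI1]) false (hne γ hγ)
      exact hXloss x hxFF hxge hv (hxFF.2 _ hj1)
    have hzj : z j = true := by
      by_cases hj1 : j ∈ I1
      · simp [hz, hj1]
      · have hjf : j = f := le_antisymm hjle (hfle j (by simp [hjI0, hj1]))
        simp [hz, hjf]
    by_cases hzjc : z (j - c) = false
    · refine Or.inr ⟨j, fun i hi => hties z hzFF i hi, ?_⟩
      show z (j - c) < z j
      rw [hzjc, hzj]
      decide
    · have hzjc' : z (j - c) = true := by
        cases h : z (j - c)
        · exact absurd h hzjc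
        · rfl
      have hjcf : j - c = f := by
        have := of_decide_eq_true hzjc'
        rcases this with h | h
        · exact absurd h hjcI1
        · exact h
      have hjf : j ≠ f := by
        intro h
        apply hc0
        have : j - c = j := by rw [hjcf, h]
        exact sub_eq_self.mp this
      have hjltf : j < f := lt_of_le_of_ne hjle hjf
      have hcpos : 0 < (c : ℕ) := by
        rcases Nat.eq_zero_or_pos (c : ℕ) with h | h
        · exact absurd (Fin.ext (by simpa using h)) hc0
        · exact h
      have hδle : (m + 1) - (c : ℕ) ≤ (f : ℕ) := by
        have hsubval : (((m + 1) - (c : ℕ)) + (j : ℕ)) % (m + 1) = (f : ℕ) := by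
          have := congrArg Fin.val hjcf
          rw [Fin.sub_def] at this
          exact this
        have hjv : (j : ℕ) < (f : ℕ) := hjltf
        have hfv : (f : ℕ) < m + 1 := f.isLt
        have hcv : (c : ℕ) < m + 1 := c.isLt
        rcases Nat.lt_or_ge (((m + 1) - (c : ℕ)) + (j : ℕ)) (m + 1) with h | h
        · rw [Nat.mod_eq_of_lt h] at hsubval; omega
        · have h2 : (((m + 1) - (c : ℕ)) + (j : ℕ)) % (m + 1)
              = ((m + 1) - (c : ℕ)) + (j : ℕ) - (m + 1) := by
            rw [Nat.mod_eq_sub_mod h, Nat.mod_eq_of_lt (by omega)]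
          rw [h2] at hsubval; omega
      obtain ⟨x, hxFF, hxge, hxf⟩ :=
        hcomp γ hγ f (by simp [hfI0, hfI1]) true (hne γ hγ)
      rw [hperm x] at hxge
      -- induction removing extra ones
      have key : ∀ (x : Fin (m + 1) → Bool), x ∈ FF I0 I1 → x f = true →
          (Finset.univ.filter (fun i => x i = true ∧ z i = false)) = ∅ → x = z := by
        intro x hx hxf hempty
        funext i
        cases hzi : z i
        · by_contra hxi
          have hxi' : x i = true := by
            cases h : x i
            · exact absurd h hxi
            · rfl
          have hmem : i ∈ Finset.univ.filter (fun i => x i = true ∧ z i = false) :=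
            Finset.mem_filter.mpr ⟨Finset.mem_univ _, hxi', hzi⟩
          rw [hempty] at hmem
          exact absurd hmem (Finset.notMem_empty i)
        · rcases of_decide_eq_true hzi with h | h
          · exact hx.2 i h
          · rw [h]; exact hxf
      have main : ∀ (N : ℕ) (x : Fin (m + 1) → Bool), x ∈ FF I0 I1 → x f = true →
          lexGe x (fun i => x (i - c)) →
          (Finset.univ.filter (fun i => x i = true ∧ z i = false)).card ≤ N →
          lexGe z (fun i => z (i - c)) := by
        intro N
        induction N with
        | zero =>
          intro x hx hxf hxge hcard
          have hemp : (Finset.univ.filter (fun i => x i = true ∧ z i = false)) = ∅ :=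
            Finset.card_eq_zero.mp (Nat.le_zero.mp hcard)
          have := key x hx hxf hemp
          rwa [this] at hxge
        | succ N ih =>
          intro x hx hxf hxge hcard
          rcases Finset.eq_empty_or_nonempty
              (Finset.univ.filter (fun i => x i = true ∧ z i = false)) with hemp | ⟨d, hd⟩
          · have := key x hx hxf hemp
            rwa [this] at hxge
          · simp only [Finset.mem_filter, Finset.mem_univ, true_and] at hd
            obtain ⟨hxd, hzd⟩ := hd
            have hdI0 : d ∉ I0 := by
              intro h; rw [hx.1 d h] at hxd; cases hxd
            have hdI1 : d ∉ I1 := by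
              intro h; simp [hz, h] at hzd
            have hdf : d ≠ f := by
              intro h; simp [hz, h] at hzd
            have hfd : f < d :=
              lt_of_le_of_ne (hfle d (by simp [hdI0, hdI1])) (Ne.symm hdf)
            have hdval : (m + 1) - (c : ℕ) ≤ (d : ℕ) :=
              le_trans hδle (le_of_lt (Fin.lt_def.mp hfd))
            set x' := Function.update x d false with hx'
            have hx'FF : x' ∈ FF I0 I1 := by
              constructor
              · intro i hi
                have : i ≠ d := fun h => hdI0 (h ▸ hi)
                rw [hx', Function.update_of_ne this]
                exact hx.1 i hi
              · intro i hi
                have : i ≠ d := fun h => hdI1 (h ▸ hi)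
                rw [hx', Function.update_of_ne this]
                exact hx.2 i hi
            have hx'f : x' f = true := by
              rw [hx', Function.update_of_ne (Ne.symm hdf)]; exact hxf
            have hx'ge := lexGe_update c hc0 x hxge d hdval hxd
            have hfilter : (Finset.univ.filter (fun i => x' i = true ∧ z i = false))
                = (Finset.univ.filter (fun i => x i = true ∧ z i = false)).erase d := by
              ext i
              simp only [Finset.mem_filter, Finset.mem_univ, true_and, Finset.mem_erase]
              constructor
              · rintro ⟨h1, h2⟩
                have hid : i ≠ d := by
                  intro h
                  rw [h, hx', Function.update_self] at h1
                  cases h1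
                rw [hx', Function.update_of_ne hid] at h1
                exact ⟨hid, h1, h2⟩
              · rintro ⟨hid, h1, h2⟩
                rw [hx', Function.update_of_ne hid]
                exact ⟨h1, h2⟩
            apply ih x' hx'FF hx'f hx'ge
            rw [hfilter, Finset.card_erase_of_mem (by simp [hxd, hzd])]
            omega
      exact main _ x hxFF hxf hxge le_rfl
end

section
/- Let Γ be a subgroup of the cyclic group generated by the cyclic shift (1,…,n), let I_0, I_1 ⊆ [n] be disjoint with I_0 ∪ I_1 ⊊ [n], complete for each individual constraint x ⪰ γ(x) for γ ∈ Γ, and suppose X_γ ∩ F(I_0,I_1) ≠ ∅ for each γ ∈ Γ. Let î = min{ i ∈ [n] : i ∉ I_0 ∪ I_1 } and define x̃ ∈ F(I_0, I_1) by x̃_i = 1 if i ∈ I_1 ∪ {î} and x̃_i = 0 otherwise. Then x̃ ⪰ γ(x̃) for all γ ∈ Γ. -/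
lemma rot_apply {n : ℕ} [NeZero n] (γ : Equiv.Perm (Fin n))
    (hγ : γ ∈ Subgroup.zpowers (finRotate n)) (i : Fin n) : γ i = i + γ 0 := by
  let S : Subgroup (Equiv.Perm (Fin n)) :=
    { carrier := { σ | ∀ i : Fin n, σ i = i + σ 0 }
      one_mem' := by
        intro i
        simp
      mul_mem' := by
        intro a b ha hb i
        simp only [Set.mem_setOf_eq] at ha hb
        rw [Equiv.Perm.mul_apply, Equiv.Perm.mul_apply, hb i, ha (i + b 0), ha (b 0),
          add_assoc]
      inv_mem' := by
        intro a ha i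
        simp only [Set.mem_setOf_eq] at ha ⊢
        have h0 : a⁻¹ 0 + a 0 = 0 := by
          have h := ha (a⁻¹ 0)
          rw [show ∀ x, a (a⁻¹ x) = x from fun x => a.apply_symm_apply x] at h
          exact h.symm
        apply a.injective
        rw [show ∀ x, a (a⁻¹ x) = x from fun x => a.apply_symm_apply x, ha (i + a⁻¹ 0), add_assoc, h0, add_zero] }
  have hFR : finRotate n ∈ S := by
    show ∀ i : Fin n, finRotate n i = i + finRotate n 0
    cases n with
    | zero => exact fun i => i.elim0
    | succ m =>
      intro i
      rw [finRotate_succ_apply, finRotate_succ_apply, zero_add]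
  have hle : Subgroup.zpowers (finRotate n) ≤ S := Subgroup.zpowers_le.mpr hFR
  exact hle hγ i

lemma lex_not_ge {n : ℕ} {x y : Fin n → Bool} (h : ¬ lexGe x y) :
    ∃ j : Fin n, (∀ i : Fin n, i < j → x i = y i) ∧ x j = false ∧ y j = true := by
  classical
  have hne : x ≠ y := fun he => h (Or.inl he)
  have hex : ∃ i, x i ≠ y i := Function.ne_iff.mp hne
  set S : Finset (Fin n) := Finset.univ.filter (fun i : Fin n => x i ≠ y i) with hSdef
  have hS : S.Nonempty := by
    obtain ⟨i, hi⟩ := hex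
    exact ⟨i, by simp [hSdef, hi]⟩
  set j := S.min' hS with hj
  have hjS : j ∈ S := S.min'_mem hS
  have hd : x j ≠ y j := by
    have := hjS
    simp only [hSdef, Finset.mem_filter] at this
    exact this.2
  have hag : ∀ i : Fin n, i < j → x i = y i := by
    intro i hi
    by_contra hne'
    have hiS : i ∈ S := by simp [hSdef, hne']
    exact absurd (S.min'_le i hiS) (not_le.mpr hi)
  cases hx : x j <;> cases hy : y j
  · exact absurd (hx.trans hy.symm) hd
  · exact ⟨j, hag, hx, hy⟩
  · exact absurd (Or.inr ⟨j, hag, by rw [hx, hy]; exact Bool.false_lt_true⟩ : lexGe x y) h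
  · exact absurd (hx.trans hy.symm) hd

theorem lexmax_witness_construction (n : ℕ)
    (Γ : Subgroup (Equiv.Perm (Fin n)))
    (hΓ : Γ ≤ Subgroup.zpowers (finRotate n))
    (I0 I1 : Finset (Fin n)) (hdis : Disjoint I0 I1)
    (hproper : ∃ i : Fin n, i ∉ I0 ∪ I1)
    (hcomp : ∀ γ ∈ Γ, ∀ i : Fin n, i ∉ I0 ∪ I1 → ∀ b : Bool,
      ∃ x ∈ FF I0 I1, lexGe x (permAct γ x) ∧ x i = b)
    (hne : ∀ γ ∈ Γ, ∃ x ∈ FF I0 I1, lexGe x (permAct γ x))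
    (ihat : Fin n) (hihat : ihat ∉ I0 ∪ I1)
    (hmin : ∀ i : Fin n, i ∉ I0 ∪ I1 → ihat ≤ i) :
    (fun i => decide (i ∈ I1) || decide (i = ihat)) ∈ FF I0 I1 ∧
    ∀ γ ∈ Γ, lexGe (fun i => decide (i ∈ I1) || decide (i = ihat))
      (permAct γ (fun i => decide (i ∈ I1) || decide (i = ihat))) := by
  haveI : NeZero n := NeZero.of_pos ihat.pos
  set e : Fin n → Bool := fun i => decide (i ∈ I1) || decide (i = ihat) with he_def
  have hetrue : ∀ i : Fin n, e i = true ↔ (i ∈ I1 ∨ i = ihat) := by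
    intro i; rw [he_def]; simp
  have hefalse : ∀ i : Fin n, e i = false ↔ (i ∉ I1 ∧ i ≠ ihat) := by
    intro i; rw [he_def]; simp
  have heFF : e ∈ FF I0 I1 := by
    constructor
    · intro i hi
      rw [hefalse]
      refine ⟨fun h1 => Finset.disjoint_left.mp hdis hi h1, fun h => hihat ?_⟩
      rw [← h]; exact Finset.mem_union_left _ hi
    · intro i hi
      rw [hetrue]; exact Or.inl hi
  have hfix : ∀ i : Fin n, i < ihat → i ∈ I0 ∪ I1 := by
    intro i hi
    by_contra h
    exact absurd (hmin i h) (not_le.mpr hi)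
  have hmemI0 : ∀ i : Fin n, i < ihat → e i = false → i ∈ I0 := by
    intro i hi hei
    rcases Finset.mem_union.mp (hfix i hi) with h0 | h1
    · exact h0
    · exact absurd h1 ((hefalse i).mp hei).1
  refine ⟨heFF, ?_⟩
  intro γ hγ
  have hγz := hΓ hγ
  have hγzi : γ⁻¹ ∈ Subgroup.zpowers (finRotate n) :=
    (Subgroup.zpowers (finRotate n)).inv_mem hγz
  set c : Fin n := γ⁻¹ 0 with hc_def
  have hact : ∀ (x : Fin n → Bool) (i : Fin n), permAct γ x i = x (i + c) := by
    intro x i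
    show x (γ⁻¹ i) = x (i + c)
    rw [hc_def, rot_apply _ hγzi i]
  by_cases hc0 : c = 0
  · left
    funext i
    rw [hact e i, hc0, add_zero]
  · by_contra hbad
    obtain ⟨j, hagree', hej, hgj⟩ := lex_not_ge hbad
    have hagree : ∀ i : Fin n, i < j → e i = e (i + c) := by
      intro i hi
      rw [← hact e i]
      exact hagree' i hi
    have hejc : e (j + c) = true := by rw [← hact e j]; exact hgj
    obtain ⟨x1, hx1FF, hx1ge, hx1h⟩ := hcomp γ hγ ihat hihat true
    obtain ⟨x0, hx0FF, hx0ge, hx0h⟩ := hcomp γ hγ ihat hihat false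
    have hcase : ∀ x : Fin n → Bool, lexGe x (permAct γ x) →
        (∀ i, x i = x (i + c)) ∨
        ∃ dd : Fin n, (∀ i : Fin n, i < dd → x i = x (i + c)) ∧
          x dd = true ∧ x (dd + c) = false := by
      intro x hx
      rcases hx with h | ⟨dd, hag, hlt⟩
      · left
        intro i
        conv_lhs => rw [h]
        exact hact x i
      · right
        have hb := Bool.lt_iff.mp hlt
        refine ⟨dd, fun i hi => by rw [hag i hi]; exact hact x i, hb.2, ?_⟩
        rw [← hact x dd]; exact hb.1
    have hval1 : ∀ i : Fin n, e i = true → x1 i = true := by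
      intro i hi
      rcases (hetrue i).mp hi with h | h
      · exact hx1FF.2 i h
      · rw [h]; exact hx1h
    rcases lt_trichotomy j ihat with hji | hji | hji
    · -- j < ihat : use x1
      have hjI0 : j ∈ I0 := hmemI0 j hji hej
      have hx1jc : x1 (j + c) = true := hval1 _ hejc
      have hx1jf : x1 j = false := hx1FF.1 j hjI0
      rcases hcase x1 hx1ge with hinv | ⟨d1, hag1, hd1t, hd1f⟩
      · have h := hinv j
        rw [hx1jf, hx1jc] at h
        exact Bool.false_ne_true h
      · rcases lt_trichotomy d1 j with h | h | h
        · have hd1ih : d1 < ihat := lt_trans h hji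
          rcases Finset.mem_union.mp (hfix d1 hd1ih) with h0 | h1
          · rw [hx1FF.1 d1 h0] at hd1t; exact Bool.false_ne_true hd1t
          · have he1 : e (d1 + c) = true := by
              rw [← hagree d1 h]
              exact (hetrue d1).mpr (Or.inl h1)
            rw [hval1 _ he1] at hd1f
            exact (Bool.false_ne_true hd1f.symm).elim
        · rw [h, hx1jf] at hd1t; exact Bool.false_ne_true hd1t
        · have hh := hag1 j h
          rw [hx1jf, hx1jc] at hh
          exact Bool.false_ne_true hh
    · -- j = ihat : impossible
      rw [hji, (hetrue ihat).mpr (Or.inr rfl)] at hej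
      exact Bool.false_ne_true hej.symm
    · -- ihat < j
      have heihc : e (ihat + c) = true := by
        rw [← hagree ihat hji]
        exact (hetrue ihat).mpr (Or.inr rfl)
      have hihcI1 : ihat + c ∈ I1 := by
        rcases (hetrue _).mp heihc with h | h
        · exact h
        · exact absurd (add_eq_left.mp h) hc0
      have hx0ihc : x0 (ihat + c) = true := hx0FF.2 _ hihcI1
      rcases hcase x0 hx0ge with hinv | ⟨d0, hag0, hd0t, hd0f⟩
      · have hh := hinv ihat
        rw [hx0h, hx0ihc] at hh
        exact Bool.false_ne_true hh
      · rcases lt_trichotomy d0 ihat with h | h | h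
        swap
        · rw [h, hx0h] at hd0t; exact Bool.false_ne_true hd0t
        swap
        · have hh := hag0 ihat h
          rw [hx0h, hx0ihc] at hh
          exact Bool.false_ne_true hh
        -- d0 < ihat
        have hd0I1 : d0 ∈ I1 := by
          rcases Finset.mem_union.mp (hfix d0 h) with h0 | h1
          · rw [hx0FF.1 d0 h0] at hd0t; exact absurd hd0t (Bool.false_ne_true)
          · exact h1
        have hed0c : e (d0 + c) = true := by
          rw [← hagree d0 (lt_trans h hji)]
          exact (hetrue d0).mpr (Or.inl hd0I1)
        have hpc : d0 + c = ihat := by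
          rcases (hetrue _).mp hed0c with hA | hB
          · rw [hx0FF.2 _ hA] at hd0f
            exact absurd hd0f.symm Bool.false_ne_true
          · exact hB
        have hd_pos : 0 < c.val := by
          rcases Nat.eq_zero_or_pos c.val with h0 | hp
          · exact absurd (Fin.ext (by simp [h0])) hc0
          · exact hp
        have hdle : c.val ≤ ihat.val := by
          have h1 : (d0 + c).val = ihat.val := by rw [hpc]
          rw [Fin.val_add] at h1
          have h2 : d0.val < ihat.val := h
          have h3 := d0.isLt
          have h4 := c.isLt
          have h5 := ihat.isLt
          rcases Nat.lt_or_ge (d0.val + c.val) n with hlt | hge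
          · rw [Nat.mod_eq_of_lt hlt] at h1; omega
          · have hm : (d0.val + c.val) % n = d0.val + c.val - n := by
              rw [Nat.mod_eq_sub_mod hge, Nat.mod_eq_of_lt (by omega)]
            rw [hm] at h1; omega
        have chain : ∀ (w : Fin n) (z : Fin n → Bool), z ∈ FF I0 I1 →
            (∀ a : Fin n, a < w → z a = z (a + c)) →
            (∀ a : Fin n, a < w → e a = e (a + c)) →
            z w = true → e w = false → False := by
          intro w z hzFF hzag heag hzw hew
          have step : ∀ v : ℕ, ∀ hv : v < n, v ≤ w.val →
              z ⟨v, hv⟩ = true → e ⟨v, hv⟩ = false → False := by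
            intro v
            induction v using Nat.strong_induction_on with
            | _ v ih =>
              intro hv hvw hzv hev
              rcases Nat.lt_or_ge v c.val with hsmall | hbig
              · have hlt : (⟨v, hv⟩ : Fin n) < ihat := by
                  rw [Fin.lt_def]
                  exact lt_of_lt_of_le hsmall hdle
                have hI0 : (⟨v, hv⟩ : Fin n) ∈ I0 := hmemI0 _ hlt hev
                rw [hzFF.1 _ hI0] at hzv
                exact Bool.false_ne_true hzv
              · have hv' : v - c.val < n := by omega
                have hac : (⟨v - c.val, hv'⟩ : Fin n) + c = ⟨v, hv⟩ := by
                  apply Fin.ext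
                  rw [Fin.val_add]
                  show (v - c.val + c.val) % n = v
                  have hvv : v - c.val + c.val = v := by omega
                  rw [hvv, Nat.mod_eq_of_lt hv]
                have haw : (⟨v - c.val, hv'⟩ : Fin n) < w := by
                  rw [Fin.lt_def]
                  show v - c.val < w.val
                  omega
                have hz' : z ⟨v - c.val, hv'⟩ = true := by
                  rw [hzag _ haw, hac]; exact hzv
                have he' : e ⟨v - c.val, hv'⟩ = false := by
                  rw [heag _ haw, hac]; exact hev
                exact ih (v - c.val) (by omega) hv' (by omega) hz' he'
          have hw : (⟨w.val, w.isLt⟩ : Fin n) = w := Fin.ext rfl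
          exact step w.val w.isLt (le_refl _) (by rw [hw]; exact hzw) (by rw [hw]; exact hew)
        rcases hcase x1 hx1ge with hinv | ⟨d1, hag1, hd1t, hd1f⟩
        · have hx1j : x1 j = true := by rw [hinv j]; exact hval1 _ hejc
          exact chain j x1 hx1FF (fun a _ => hinv a) hagree hx1j hej
        · rcases lt_trichotomy d1 j with hdj | hdj | hdj
          · rcases lt_trichotomy d1 ihat with hdi | hdi | hdi
            · rcases Finset.mem_union.mp (hfix d1 hdi) with h0 | h1
              · rw [hx1FF.1 d1 h0] at hd1t; exact Bool.false_ne_true hd1t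
              · have he1 : e (d1 + c) = true := by
                  rw [← hagree d1 hdj]
                  exact (hetrue d1).mpr (Or.inl h1)
                rw [hval1 _ he1] at hd1f
                exact (Bool.false_ne_true hd1f.symm).elim
            · have he1 : e (d1 + c) = true := by
                rw [← hagree d1 hdj, hdi]
                exact (hetrue ihat).mpr (Or.inr rfl)
              rw [hval1 _ he1] at hd1f
              exact (Bool.false_ne_true hd1f.symm).elim
            · have hed1c : e (d1 + c) = false := by
                cases hh : e (d1 + c)
                · rfl
                · rw [hval1 _ hh] at hd1f
                  exact (Bool.false_ne_true hd1f.symm).elim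
              have hed1 : e d1 = false := by rw [hagree d1 hdj]; exact hed1c
              exact chain d1 x1 hx1FF hag1 (fun a ha => hagree a (lt_trans ha hdj)) hd1t hed1
          · rw [hdj, hval1 _ hejc] at hd1f
            exact (Bool.false_ne_true hd1f.symm).elim
          · have hx1j : x1 j = true := by rw [hag1 j hdj]; exact hval1 _ hejc
            exact chain j x1 hx1FF (fun a ha => hag1 a (lt_trans ha hdj)) hagree hx1j hej
end

section
/- Let Γ be a subgroup of the cyclic group generated by the cyclic shift (1,…,n), let I_0, I_1 ⊆ [n] be disjoint and complete for every γ ∈ Γ, let î = min{ i : i ∉ I_0 ∪ I_1 }, and suppose î > n/2. Then the vector x̃ ∈ {0,1}^n with x̃_i = 1 iff i ∈ I_1 satisfies x̃ ≻ γ(x̃) strictly for every γ ∈ Γ with γ ≠ id. -/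
lemma lexGt_asymm {n : ℕ} {x y : Fin n → Bool} (h1 : lexGt x y) (h2 : lexGt y x) : False := by
  obtain ⟨j1, ha1, hb1⟩ := h1
  obtain ⟨j2, ha2, hb2⟩ := h2
  rcases lt_trichotomy j1 j2 with h | h | h
  · rw [ha2 j1 h] at hb1; exact absurd hb1 (lt_irrefl _)
  · subst h; exact absurd (hb1.trans hb2) (lt_irrefl _)
  · rw [ha1 j2 h] at hb2; exact absurd hb2 (lt_irrefl _)

lemma lexGe_lexGt_false {n : ℕ} {x y : Fin n → Bool} (h1 : lexGe x y) (h2 : lexGt y x) :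
    False := by
  rcases h1 with h1 | h1
  · subst h1; obtain ⟨j, -, hb⟩ := h2; exact absurd hb (lt_irrefl _)
  · exact lexGt_asymm h1 h2

lemma fixval {n : ℕ} {I0 I1 : Finset (Fin n)} (hdis : Disjoint I0 I1)
    {x : Fin n → Bool} (hx : x ∈ FF I0 I1) {i : Fin n} (hi : i ∈ I0 ∪ I1) :
    x i = decide (i ∈ I1) := by
  rcases Finset.mem_union.1 hi with h | h
  · have h' : i ∉ I1 := Finset.disjoint_left.mp hdis h
    simp [hx.1 i h, h']
  · simp [hx.2 i h, h]

/-- Core pivot lemma: if there is a "pivot" position `p < î` such that below `p` the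
permuted vector is determined (reads fixed coordinates) and at `p` it reads the free
coordinate `w`, then the lex-max candidate strictly beats its `δ`-image by position `p`. -/
lemma core_pivot {n : ℕ} {Γ : Subgroup (Equiv.Perm (Fin n))} {I0 I1 : Finset (Fin n)}
    (hdis : Disjoint I0 I1)
    (hcomp : ∀ γ ∈ Γ, ∀ i : Fin n, i ∉ I0 ∪ I1 → ∀ b : Bool,
      ∃ x ∈ FF I0 I1, lexGe x (permAct γ x) ∧ x i = b)
    (ihat : Fin n)
    (hminfix : ∀ i : Fin n, i.val < ihat.val → i ∈ I0 ∪ I1)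
    (δ : Equiv.Perm (Fin n)) (hδΓ : δ ∈ Γ)
    (c : Fin n) (hinv : ∀ i, δ⁻¹ i = i - c)
    (w : Fin n) (hw : w ∉ I0 ∪ I1)
    (p : Fin n) (hp : p.val < ihat.val) (hpw : p - c = w)
    (hfix : ∀ i : Fin n, i.val < p.val → (i - c) ∈ I0 ∪ I1) :
    ∃ j : Fin n, j.val ≤ p.val ∧
      (∀ i : Fin n, i < j → ((i ∈ I1) ↔ ((i - c) ∈ I1))) ∧
      j ∈ I1 ∧ (j - c) ∉ I1 := by
  obtain ⟨x, hxF, hxge, hxw⟩ := hcomp δ hδΓ w hw true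
  have hpact : ∀ (y : Fin n → Bool) (i : Fin n), permAct δ y i = y (i - c) := by
    intro y i; simp only [permAct, hinv]
  by_cases hdiff : ∃ i : Fin n, i.val ≤ p.val ∧ ¬((i ∈ I1) ↔ ((i - c) ∈ I1))
  · obtain ⟨i0, hi0⟩ := hdiff
    set S : Finset (Fin n) :=
      Finset.univ.filter (fun i => i.val ≤ p.val ∧ ¬((i ∈ I1) ↔ ((i - c) ∈ I1))) with hSdef
    have hSne : S.Nonempty := ⟨i0, Finset.mem_filter.mpr ⟨Finset.mem_univ _, hi0⟩⟩
    set j0 := S.min' hSne with hj0def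
    have hj0S : j0 ∈ S := S.min'_mem hSne
    obtain ⟨-, hj0p, hj0d⟩ := Finset.mem_filter.mp hj0S
    have hagree : ∀ i : Fin n, i < j0 → ((i ∈ I1) ↔ ((i - c) ∈ I1)) := by
      intro i hi
      by_contra hni
      have hiS : i ∈ S := Finset.mem_filter.mpr
        ⟨Finset.mem_univ _, le_trans (le_of_lt (Fin.lt_def.mp hi)) hj0p, hni⟩
      exact absurd (S.min'_le i hiS) (not_le.mpr hi)
    by_cases hj1 : j0 ∈ I1
    · exact ⟨j0, hj0p, hagree, hj1, fun h => hj0d ⟨fun _ => h, fun _ => hj1⟩⟩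
    · have hj2 : (j0 - c) ∈ I1 := by
        by_contra h
        exact hj0d ⟨fun h' => absurd h' hj1, fun h' => absurd h' h⟩
      exfalso
      apply lexGe_lexGt_false hxge
      refine ⟨j0, ?_, ?_⟩
      · intro i hi
        have hiv : i.val < j0.val := Fin.lt_def.mp hi
        have hip : i.val < p.val := lt_of_lt_of_le hiv hj0p
        rw [hpact, fixval hdis hxF (hfix i hip), fixval hdis hxF (hminfix i (lt_trans hip hp))]
        exact decide_eq_decide.mpr (hagree i hi).symm
      · rw [hpact]
        have hxj0 : x j0 = false := by
          rw [fixval hdis hxF (hminfix j0 (lt_of_le_of_lt hj0p hp))]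
          simp [hj1]
        have hxj0c : x (j0 - c) = true := by
          rcases lt_or_eq_of_le hj0p with h | h
          · rw [fixval hdis hxF (hfix j0 h)]; simp [hj2]
          · rw [show j0 = p from Fin.ext h, hpw]; exact hxw
        rw [hxj0, hxj0c]; exact Bool.false_lt_true
  · push_neg at hdiff
    exfalso
    apply lexGe_lexGt_false hxge
    refine ⟨p, ?_, ?_⟩
    · intro i hi
      have hip : i.val < p.val := Fin.lt_def.mp hi
      rw [hpact, fixval hdis hxF (hfix i hip), fixval hdis hxF (hminfix i (lt_trans hip hp))]
      exact decide_eq_decide.mpr (hdiff i (le_of_lt hip)).symm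
    · rw [hpact, hpw]
      have hpI1 : p ∉ I1 := by
        intro h
        have h2 := (hdiff p le_rfl).mp h
        rw [hpw] at h2
        exact hw (Finset.mem_union_right _ h2)
      have h1 : x p = false := by
        rw [fixval hdis hxF (hminfix p hp)]; simp [hpI1]
      rw [h1, hxw]; exact Bool.false_lt_true

/-- The subgroup of permutations of `Fin (m+1)` that act by translation. -/
def transSub (m : ℕ) : Subgroup (Equiv.Perm (Fin (m + 1))) where
  carrier := {δ | ∀ i, δ i = i + δ 0}
  one_mem' := by intro i; simp
  mul_mem' := by
    intro a b ha hb i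
    simp only [Equiv.Perm.mul_apply]
    rw [hb i, ha (i + b 0), ha (b 0)]
    abel
  inv_mem' := by
    intro a ha i
    have h1 : ∀ j, a⁻¹ j = j - a 0 := by
      intro j
      have h2 : a (j - a 0) = j := by rw [ha (j - a 0)]; abel
      conv_lhs => rw [← h2]
      exact Equiv.symm_apply_apply a _
    rw [h1 i, h1 0]
    abel

theorem strict_lexmax_late_unfixed (n : ℕ)
    (Γ : Subgroup (Equiv.Perm (Fin n)))
    (hΓ : Γ ≤ Subgroup.zpowers (finRotate n))
    (I0 I1 : Finset (Fin n)) (hdis : Disjoint I0 I1)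
    (hproper : ∃ i : Fin n, i ∉ I0 ∪ I1)
    (hcomp : ∀ γ ∈ Γ, ∀ i : Fin n, i ∉ I0 ∪ I1 → ∀ b : Bool,
      ∃ x ∈ FF I0 I1, lexGe x (permAct γ x) ∧ x i = b)
    (ihat : Fin n) (hihat : ihat ∉ I0 ∪ I1)
    (hmin : ∀ i : Fin n, i ∉ I0 ∪ I1 → ihat ≤ i)
    (hlate : n < 2 * ((ihat : ℕ) + 1)) :
    ∀ γ ∈ Γ, γ ≠ 1 →
      lexGt (fun i => decide (i ∈ I1)) (permAct γ (fun i => decide (i ∈ I1))) := by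
  cases n with
  | zero => exact ihat.elim0
  | succ m =>
  intro γ hγ hγ1
  -- γ acts by translation by c := γ 0
  have hle : Subgroup.zpowers (finRotate (m + 1)) ≤ transSub m := by
    rw [Subgroup.zpowers_le]
    intro i
    rw [finRotate_succ_apply, finRotate_succ_apply]
    abel
  have htr : ∀ i, γ i = i + γ 0 := hle (hΓ hγ)
  set c := γ 0 with hcdef
  have hc0 : c ≠ 0 := by
    intro h
    apply hγ1
    apply Equiv.ext
    intro i
    rw [htr i, h, add_zero, Equiv.Perm.one_apply]
  have hinv : ∀ i, γ⁻¹ i = i - c := by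
    intro i
    have h2 : γ (i - c) = i := by rw [htr (i - c)]; abel
    conv_lhs => rw [← h2]
    exact Equiv.symm_apply_apply γ _
  set k := c.val with hkdef
  have hk0 : 0 < k := by
    by_contra h
    apply hc0
    apply Fin.ext
    simp only [Fin.val_zero]
    omega
  have hkN : k < m + 1 := c.isLt
  have hiub : ihat.val < m + 1 := ihat.isLt
  have hlate' : m + 1 < 2 * (ihat.val + 1) := hlate
  have hminfix : ∀ i : Fin (m + 1), i.val < ihat.val → i ∈ I0 ∪ I1 := by
    intro i hi
    by_contra h
    have := Fin.le_def.mp (hmin i h)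
    omega
  have hsub : ∀ a : Fin (m + 1), (a - c).val = ((m + 1) - k + a.val) % (m + 1) := by
    intro a
    rw [Fin.sub_def]
  have hpactv : ∀ i, permAct γ (fun i => decide (i ∈ I1)) i = decide ((i - c) ∈ I1) := by
    intro i
    simp only [permAct, hinv]
  have hpact : ∀ (y : Fin (m + 1) → Bool) (i : Fin (m + 1)),
      permAct γ y i = y (i - c) := by
    intro y i; simp only [permAct, hinv]
  by_cases hA : m + 1 ≤ ihat.val + k
  · -- Case A : wrap case, pivot at ihat + c
    have hpv : (ihat + c).val = ihat.val + k - (m + 1) := by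
      rw [Fin.val_add, Nat.mod_eq_sub_mod hA, Nat.mod_eq_of_lt (by omega)]
    obtain ⟨j, hjp, hag, hj1, hj2⟩ :=
      core_pivot hdis hcomp ihat hminfix γ hγ c hinv ihat hihat (ihat + c)
        (by omega) (add_sub_cancel_right ihat c)
        (by
          intro i hi
          rw [hpv] at hi
          apply hminfix
          rw [hsub i, Nat.mod_eq_of_lt (by omega)]
          omega)
    refine ⟨j, ?_, ?_⟩
    · intro i hi
      rw [hpactv i]
      exact decide_eq_decide.mpr (hag i hi)
    · rw [hpactv j]
      simp only [decide_eq_true hj1, decide_eq_false hj2]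
      exact Bool.false_lt_true
  · by_cases hB2 : ∃ u : Fin (m + 1), u ∉ I0 ∪ I1 ∧ (m + 1) - k ≤ u.val
    · -- Case B2 : some free coordinate is read (with wrap) before ihat; pivot at w + c
      obtain ⟨u0, hu0⟩ := hB2
      set S2 : Finset (Fin (m + 1)) :=
        Finset.univ.filter (fun u => u ∉ I0 ∪ I1 ∧ (m + 1) - k ≤ u.val) with hS2def
      have hS2ne : S2.Nonempty := ⟨u0, Finset.mem_filter.mpr ⟨Finset.mem_univ _, hu0⟩⟩
      set w := S2.min' hS2ne with hwdef
      have hwS : w ∈ S2 := S2.min'_mem hS2ne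
      obtain ⟨-, hwfree, hwge⟩ := Finset.mem_filter.mp hwS
      have hwlt : w.val < m + 1 := w.isLt
      have hpv : (w + c).val = w.val + k - (m + 1) := by
        rw [Fin.val_add, Nat.mod_eq_sub_mod (by omega), Nat.mod_eq_of_lt (by omega)]
      obtain ⟨j, hjp, hag, hj1, hj2⟩ :=
        core_pivot hdis hcomp ihat hminfix γ hγ c hinv w hwfree (w + c)
          (by omega) (add_sub_cancel_right w c)
          (by
            intro i hi
            rw [hpv] at hi
            by_contra hfree
            have hiS2 : (i - c) ∈ S2 := Finset.mem_filter.mpr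
              ⟨Finset.mem_univ _, hfree, by rw [hsub i, Nat.mod_eq_of_lt (by omega)]; omega⟩
            have := Fin.le_def.mp (S2.min'_le _ hiS2)
            rw [hsub i, Nat.mod_eq_of_lt (by omega)] at this
            omega)
      refine ⟨j, ?_, ?_⟩
      · intro i hi
        rw [hpactv i]
        exact decide_eq_decide.mpr (hag i hi)
      · rw [hpactv j]
        simp only [decide_eq_true hj1, decide_eq_false hj2]
        exact Bool.false_lt_true
    · -- Case B1 : all free coordinates are below (m+1) - k; use γ⁻¹ and a pivot at ihat - c
      push_neg at hB2
      have hkle : k ≤ ihat.val := by omega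
      have hinv' : ∀ i, γ⁻¹⁻¹ i = i - (-c) := by
        intro i
        rw [inv_inv, htr i, sub_neg_eq_add]
      have hp'v : (ihat - c).val = ihat.val - k := by
        rw [hsub ihat, Nat.mod_eq_sub_mod (by omega), Nat.mod_eq_of_lt (by omega)]
        omega
      have haddval : ∀ a : Fin (m + 1), (a - -c).val = (a.val + k) % (m + 1) := by
        intro a
        rw [sub_neg_eq_add, Fin.val_add]
      obtain ⟨j, hjp, -, hj1, hj2⟩ :=
        core_pivot hdis hcomp ihat hminfix γ⁻¹ (Γ.inv_mem hγ) (-c) hinv' ihat hihat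
          (ihat - c)
          (by omega) (by rw [sub_neg_eq_add, sub_add_cancel])
          (by
            intro i hi
            rw [hp'v] at hi
            apply hminfix
            rw [haddval i, Nat.mod_eq_of_lt (by omega)]
            omega)
      rw [hp'v] at hjp
      rw [sub_neg_eq_add] at hj2
      -- q = j + c : position where x̃ = 0 but (γ x̃) = x̃ j = 1
      have hqv : (j + c).val = j.val + k := by
        rw [Fin.val_add, Nat.mod_eq_of_lt (by omega)]
      have hqc : j + c - c = j := add_sub_cancel_right j c
      set S3 : Finset (Fin (m + 1)) :=
        Finset.univ.filter
          (fun i => i.val ≤ (j + c).val ∧ ¬((i ∈ I1) ↔ ((i - c) ∈ I1))) with hS3def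
      have hqS : (j + c) ∈ S3 := by
        refine Finset.mem_filter.mpr ⟨Finset.mem_univ _, le_rfl, fun hiff => hj2 (hiff.mpr ?_)⟩
        rw [hqc]; exact hj1
      have hS3ne : S3.Nonempty := ⟨j + c, hqS⟩
      set j0 := S3.min' hS3ne with hj0def
      have hj0S : j0 ∈ S3 := S3.min'_mem hS3ne
      obtain ⟨-, hj0q, hj0d⟩ := Finset.mem_filter.mp hj0S
      have hj0le : j0.val ≤ ihat.val := by rw [hqv] at hj0q; omega
      have hagree : ∀ i : Fin (m + 1), i < j0 → ((i ∈ I1) ↔ ((i - c) ∈ I1)) := by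
        intro i hi
        by_contra hni
        have hiS : i ∈ S3 := Finset.mem_filter.mpr
          ⟨Finset.mem_univ _, le_trans (le_of_lt (Fin.lt_def.mp hi)) hj0q, hni⟩
        exact absurd (S3.min'_le i hiS) (not_le.mpr hi)
      have hsubfix : ∀ a : Fin (m + 1), a.val ≤ ihat.val → (a - c) ∈ I0 ∪ I1 := by
        intro a ha
        rcases le_or_gt k a.val with h | h
        · apply hminfix
          rw [hsub a, Nat.mod_eq_sub_mod (by omega), Nat.mod_eq_of_lt (by omega)]
          omega
        · by_contra hfree
          have h2 := hB2 _ hfree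
          rw [hsub a, Nat.mod_eq_of_lt (by omega)] at h2
          omega
      by_cases hj0I1 : j0 ∈ I1
      · refine ⟨j0, ?_, ?_⟩
        · intro i hi
          rw [hpactv i]
          exact decide_eq_decide.mpr (hagree i hi)
        · rw [hpactv j0]
          have hj0c : (j0 - c) ∉ I1 := fun h => hj0d ⟨fun _ => h, fun _ => hj0I1⟩
          simp only [decide_eq_true hj0I1, decide_eq_false hj0c]
          exact Bool.false_lt_true
      · have hj0c1 : (j0 - c) ∈ I1 := by
          by_contra h
          exact hj0d ⟨fun h' => absurd h' hj0I1, fun h' => absurd h' h⟩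
        exfalso
        obtain ⟨x, hxF, hxge, hxihat⟩ := hcomp γ hγ ihat hihat false
        apply lexGe_lexGt_false hxge
        refine ⟨j0, ?_, ?_⟩
        · intro i hi
          have hiv : i.val < j0.val := Fin.lt_def.mp hi
          rw [hpact, fixval hdis hxF (hsubfix i (by omega)),
            fixval hdis hxF (hminfix i (by omega))]
          exact decide_eq_decide.mpr (hagree i hi).symm
        · rw [hpact]
          have h1 : x j0 = false := by
            rcases lt_or_eq_of_le hj0le with h | h
            · rw [fixval hdis hxF (hminfix j0 h)]; simp [hj0I1]
            · rw [show j0 = ihat from Fin.ext h]; exact hxihat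
          have h2 : x (j0 - c) = true := by
            rw [fixval hdis hxF (hsubfix j0 hj0le)]; simp [hj0c1]
          rw [h1, h2]; exact Bool.false_lt_true
end
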